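/- For every t > 0, the alternating theta sum S(t) = Σ_{n∈ℤ} (−1)^n e^{−n²t} satisfies 0 ≤ S(t) ≤ 1. (S(t) is the probability P(T ≤ 1/t·const) appearing as the distribution function of the Bessel(3) first hitting time, hence lies in [0,1].) -/
import Mathlib


open Real

open Complex in
lemma alt_theta_poisson (t : ℝ) (ht : 0 < t) :
    (∑' n : ℤ, (-1 : ℝ) ^ n * Real.exp (-(n:ℝ)^2 * t)) =
      (1 / (t / π) ^ (1/2 : ℝ)) *
        ∑' n : ℤ, Real.exp (-(π^2 / t) * ((n:ℝ) - 1/2)^2) := by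
  have hπ : (0:ℝ) < π := Real.pi_pos
  have ha : 0 < (((t / π : ℝ) : ℂ)).re := by
    simpa using div_pos ht hπ
  have key := Complex.tsum_exp_neg_quadratic ha (I/2)
  have htC : (t : ℂ) ≠ 0 := Complex.ofReal_ne_zero.mpr ht.ne'
  have hπC : (π : ℂ) ≠ 0 := Complex.ofReal_ne_zero.mpr hπ.ne'
  have h1 : ∀ n : ℤ, Complex.exp (-π * ((t / π : ℝ) : ℂ) * (n:ℂ)^2 + 2*π*(I/2)*(n:ℂ)) =
      (((-1 : ℝ) ^ n * Real.exp (-(n:ℝ)^2 * t) : ℝ) : ℂ) := by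
    intro n
    have e1 : -(π:ℂ) * ((t / π : ℝ) : ℂ) * (n:ℂ)^2 + 2*π*(I/2)*(n:ℂ)
        = (n:ℂ) * (π * I) + ((-(n:ℝ)^2 * t : ℝ) : ℂ) := by
      push_cast
      field_simp
      ring
    rw [e1, Complex.exp_add, Complex.exp_int_mul, Complex.exp_pi_mul_I,
      ← Complex.ofReal_exp]
    push_cast
    ring
  have h2 : ∀ n : ℤ, Complex.exp (-π / ((t / π : ℝ) : ℂ) * ((n:ℂ) + I*(I/2))^2) =
      ((Real.exp (-(π^2 / t) * ((n:ℝ) - 1/2)^2) : ℝ) : ℂ) := by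
    intro n
    have e2 : -(π:ℂ) / ((t / π : ℝ) : ℂ) * ((n:ℂ) + I*(I/2))^2
        = ((-(π^2 / t) * ((n:ℝ) - 1/2)^2 : ℝ) : ℂ) := by
      have hI : I * (I/2) = -(1/2 : ℂ) := by
        rw [mul_div_assoc', Complex.I_mul_I]
        norm_num
      rw [hI]
      push_cast
      field_simp
      ring
    rw [e2, ← Complex.ofReal_exp]
  have hcpow : (((t / π : ℝ) : ℂ)) ^ (1/2 : ℂ) = (((t / π) ^ (1/2 : ℝ) : ℝ) : ℂ) := by
    rw [Complex.ofReal_cpow (le_of_lt (div_pos ht hπ))]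
    norm_num
  rw [tsum_congr h1, tsum_congr h2, hcpow] at key
  rw [← Complex.ofReal_tsum, ← Complex.ofReal_tsum] at key
  have : ((∑' n : ℤ, (-1 : ℝ) ^ n * Real.exp (-(n:ℝ)^2 * t) : ℝ) : ℂ)
      = (((1 / (t / π) ^ (1/2 : ℝ)) *
        ∑' n : ℤ, Real.exp (-(π^2 / t) * ((n:ℝ) - 1/2)^2) : ℝ) : ℂ) := by
    rw [key]
    push_cast
    ring
  exact_mod_cast this

lemma alt_theta_summable (t : ℝ) (ht : 0 < t) :
    Summable (fun n : ℤ => (-1 : ℝ) ^ n * Real.exp (-(n:ℝ)^2 * t)) := by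
  apply Summable.of_norm
  have hnorm : ∀ n : ℤ, ‖(-1 : ℝ) ^ n * Real.exp (-(n:ℝ)^2 * t)‖
      = Real.exp (-(n:ℝ)^2 * t) := by
    intro n
    rw [norm_mul, norm_zpow, norm_neg, norm_one, one_zpow, one_mul,
      Real.norm_eq_abs, abs_of_pos (Real.exp_pos _)]
  simp_rw [hnorm]
  have hnat : Summable (fun n : ℕ => Real.exp (-((n:ℝ))^2 * t)) := by
    apply Summable.of_nonneg_of_le (fun n => (Real.exp_pos _).le)
      (fun n => ?_) (summable_geometric_of_lt_one (Real.exp_pos _).le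
        (Real.exp_lt_one_iff.mpr (neg_lt_zero.mpr ht)))
    rw [← Real.exp_nat_mul, Real.exp_le_exp]
    have h1 : (n:ℝ) ≤ (n:ℝ)^2 := by
      exact_mod_cast Nat.le_self_pow two_ne_zero n
    nlinarith
  apply Summable.of_nat_of_neg_add_one
  · exact hnat.congr (by intro n; push_cast; ring_nf)
  · refine (hnat.comp_injective (add_left_injective 1)).congr ?_
    intro n
    simp only [Function.comp_apply]
    push_cast
    ring_nf

theorem alternating_theta_mem_unit_interval (t : ℝ) (ht : 0 < t) :
    0 ≤ ∑' n : ℤ, (-1 : ℝ) ^ n * Real.exp (-(n:ℝ)^2 * t) ∧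
    (∑' n : ℤ, (-1 : ℝ) ^ n * Real.exp (-(n:ℝ)^2 * t)) ≤ 1 := by
  set f : ℤ → ℝ := fun n => (-1 : ℝ) ^ n * Real.exp (-(n:ℝ)^2 * t) with hf
  constructor
  · rw [alt_theta_poisson t ht]
    have h1 : (0:ℝ) ≤ 1 / (t / π) ^ (1/2 : ℝ) := by positivity
    exact mul_nonneg h1 (tsum_nonneg fun n => (Real.exp_pos _).le)
  · have hsum := alt_theta_summable t ht
    have fnat : ∀ m : ℕ, f (m:ℤ) = (-1:ℝ)^m * Real.exp (-(m:ℝ)^2 * t) := by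
      intro m
      simp [hf, zpow_natCast]
    have hinv : ∀ m : ℕ, ((-1:ℝ)^m)⁻¹ = (-1:ℝ)^m := by
      intro m
      rw [← inv_pow]
      norm_num
    have fneg : ∀ m : ℕ, f (-(m:ℤ)) = f (m:ℤ) := by
      intro m
      simp [hf, zpow_neg, zpow_natCast, hinv m]
    have h₁ : Summable (fun n : ℕ => f (n:ℤ)) :=
      hsum.comp_injective (fun a b hab => by exact_mod_cast hab)
    have h₂ : Summable (fun n : ℕ => f (-((n:ℤ)+1))) :=
      hsum.comp_injective (fun a b hab => by simpa using hab)
    have hsplit : (∑' n : ℤ, f n) = (∑' n : ℕ, f (n:ℤ)) + ∑' n : ℕ, f (-((n:ℤ)+1)) :=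
      tsum_of_nat_of_neg_add_one h₁ h₂
    set g : ℕ → ℝ := fun n => f (((n+1:ℕ)):ℤ) with hg
    have hgsum : Summable g := h₁.comp_injective (add_left_injective 1)
    have hsplit2 : (∑' n : ℕ, f (n:ℤ)) = 1 + ∑' n : ℕ, g n := by
      have h0 : f ((0:ℕ):ℤ) = 1 := by simp [hf]
      rw [tsum_eq_zero_add' (f := fun n : ℕ => f (n:ℤ)) hgsum, h0]
    have hneg2 : (∑' n : ℕ, f (-((n:ℤ)+1))) = ∑' n : ℕ, g n := by
      refine tsum_congr fun n => ?_
      have h1 : -((n:ℤ)+1) = -(((n+1:ℕ)):ℤ) := by push_cast; ring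
      rw [h1, fneg]
    have hge : ∀ k : ℕ, g (2*k) = -Real.exp (-(2*(k:ℝ)+1)^2 * t) := by
      intro k
      show f (((2*k+1:ℕ)):ℤ) = _
      have h2 : (-1:ℝ)^(2*k+1) = -1 := Odd.neg_one_pow ⟨k, by ring⟩
      rw [fnat (2*k+1), h2]
      push_cast
      ring_nf
    have hgo : ∀ k : ℕ, g (2*k+1) = Real.exp (-(2*(k:ℝ)+2)^2 * t) := by
      intro k
      show f (((2*k+1+1:ℕ)):ℤ) = _
      have h2 : (-1:ℝ)^(2*k+1+1) = 1 := Even.neg_one_pow ⟨k+1, by ring⟩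
      rw [fnat (2*k+1+1), h2]
      push_cast
      ring_nf
    have he : Summable (fun k : ℕ => g (2*k)) :=
      hgsum.comp_injective (fun a b hab => by omega)
    have ho : Summable (fun k : ℕ => g (2*k+1)) :=
      hgsum.comp_injective (fun a b hab => by omega)
    have hoddsum : Summable (fun k : ℕ => Real.exp (-(2*(k:ℝ)+1)^2 * t)) := by
      refine he.neg.congr fun k => ?_
      rw [hge k]; ring
    have hevensum : Summable (fun k : ℕ => Real.exp (-(2*(k:ℝ)+2)^2 * t)) := by
      refine ho.congr fun k => ?_
      rw [hgo k]
    have hA : (∑' n : ℕ, g n) ≤ 0 := by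
      rw [← tsum_even_add_odd he ho]
      have e1 : (∑' k : ℕ, g (2*k)) = -∑' k : ℕ, Real.exp (-(2*(k:ℝ)+1)^2 * t) := by
        rw [← tsum_neg]
        exact tsum_congr fun k => by rw [hge k]
      have e2 : (∑' k : ℕ, g (2*k+1)) = ∑' k : ℕ, Real.exp (-(2*(k:ℝ)+2)^2 * t) :=
        tsum_congr fun k => hgo k
      rw [e1, e2]
      have hle : (∑' k : ℕ, Real.exp (-(2*(k:ℝ)+2)^2 * t))
          ≤ ∑' k : ℕ, Real.exp (-(2*(k:ℝ)+1)^2 * t) := by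
        refine Summable.tsum_le_tsum (fun k => ?_) hevensum hoddsum
        rw [Real.exp_le_exp]
        nlinarith [mul_nonneg (by positivity : (0:ℝ) ≤ 4*(k:ℝ)+3) ht.le]
      linarith
    calc (∑' n : ℤ, f n) = 1 + (∑' n : ℕ, g n) + ∑' n : ℕ, g n := by
          rw [hsplit, hsplit2, hneg2]
      _ ≤ 1 := by linarith
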